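/- If L is a context-free language and R is a regular language such that L ∩ R is not context-free, then a contradiction follows; consequently, any language L whose intersection with the regular language { u^n 0^m h } equals the non-context-free language { u^n 0^m h : n ≥ 2^m − 1 } is itself not context-free. -/

import Mathlib

/-!
Context-free languages are closed under intersection with regular ones (product of a grammar with
a DFA), so if `L ⊓ Lu0h = Lcc'` with `L` context-free, `Lcc'` would be context-free. The pumping
lemma refutes this on `w = u^(2^p - 1) 0^p h`: the pumped parts contain no `h`; if they contain no
`0`, pumping down keeps `m = p` but lowers `n` below `2^p - 1`; otherwise `m` grows linearly in the
pumping exponent, so `2^m` eventually exceeds the linearly growing number of `u`s.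

The pumping lemma is proved on parse trees of minimal size, searching top-down for a nonterminal
repeated along a path; minimality ensures that the repetition has a nonempty context.
-/

inductive Alph : Type
  | u | z | h
deriving DecidableEq

/-- The regular language { u^n 0^m h : n, m ≥ 0 } (with `Alph.z` playing the role of `0`). -/
def Lu0h : Language Alph :=
  {w | ∃ n m : ℕ, w = List.replicate n Alph.u ++ List.replicate m Alph.z ++ [Alph.h]}

/-- The language L' = { u^n 0^m h : n ≥ 2^m − 1 }. -/
def Lcc' : Language Alph :=
  {w | ∃ n m : ℕ, w = List.replicate n Alph.u ++ List.replicate m Alph.z ++ [Alph.h] ∧ 2 ^ m - 1 ≤ n}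

/-- n-fold repetition of a word. -/
def listPow {α : Type*} (l : List α) (n : ℕ) : List α := (List.replicate n l).flatten

theorem listPow_zero {α : Type*} (l : List α) : listPow l 0 = [] := rfl

theorem listPow_succ {α : Type*} (l : List α) (n : ℕ) : listPow l (n + 1) = l ++ listPow l n := by
  simp [listPow, List.replicate_succ]

theorem listPow_succ' {α : Type*} (l : List α) (n : ℕ) : listPow l (n + 1) = listPow l n ++ l := by
  simp [listPow, List.replicate_succ']

namespace ContextFreeGrammar

variable {T : Type*}

mutual
/-- `g.ParseTree s w n`: a parse tree with root `s`, yield `w` and `n` nodes. -/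
inductive ParseTree (g : ContextFreeGrammar T) : Symbol T g.NT → List T → ℕ → Prop
  | leaf (t : T) : ParseTree g (.terminal t) [t] 1
  | node {r : ContextFreeRule T g.NT} (hr : r ∈ g.rules) {w : List T} {n : ℕ}
      (hc : ParseForest g r.output w n) : ParseTree g (.nonterminal r.input) w (n + 1)

inductive ParseForest (g : ContextFreeGrammar T) : List (Symbol T g.NT) → List T → ℕ → Prop
  | nil : ParseForest g [] [] 0
  | cons {s : Symbol T g.NT} {w : List T} {n : ℕ} {ss : List (Symbol T g.NT)} {ws : List T}
      {m : ℕ} (h : ParseTree g s w n) (hs : ParseForest g ss ws m) :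
      ParseForest g (s :: ss) (w ++ ws) (n + m)
end

variable {g : ContextFreeGrammar T}

mutual
theorem ParseTree.derives {s : Symbol T g.NT} {w : List T} {n : ℕ} :
    g.ParseTree s w n → g.Derives [s] (w.map .terminal)
  | .leaf t => Derives.refl _
  | .node hr hc => Produces.trans_derives ⟨_, hr, .input_output⟩ hc.derives

theorem ParseForest.derives {ss : List (Symbol T g.NT)} {w : List T} {n : ℕ} :
    g.ParseForest ss w n → g.Derives ss (w.map .terminal)
  | .nil => Derives.refl _
  | .cons h hs => by
    simpa using (h.derives.append_right _).trans (hs.derives.append_left _)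
end

theorem ParseForest.append {ss₁ ss₂ : List (Symbol T g.NT)} {w₁ w₂ : List T} {n₁ n₂ : ℕ}
    (h₁ : g.ParseForest ss₁ w₁ n₁) (h₂ : g.ParseForest ss₂ w₂ n₂) :
    g.ParseForest (ss₁ ++ ss₂) (w₁ ++ w₂) (n₁ + n₂) := by
  induction ss₁ generalizing w₁ n₁ with
  | nil => obtain _ | _ := h₁; simpa using h₂
  | cons s ss ih =>
    obtain _ | ⟨h, hs⟩ := h₁
    simpa [Nat.add_assoc] using ParseForest.cons h (ih hs)

theorem ParseForest.exists_of_append {ss₁ ss₂ : List (Symbol T g.NT)} {w : List T} {n : ℕ}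
    (h : g.ParseForest (ss₁ ++ ss₂) w n) :
    ∃ w₁ w₂ n₁ n₂, w = w₁ ++ w₂ ∧ n = n₁ + n₂ ∧
      g.ParseForest ss₁ w₁ n₁ ∧ g.ParseForest ss₂ w₂ n₂ := by
  induction ss₁ generalizing w n with
  | nil => exact ⟨[], w, 0, n, rfl, by simp, .nil, h⟩
  | cons s ss ih =>
    obtain _ | ⟨h₀, hs⟩ := h
    obtain ⟨w₁, w₂, n₁, n₂, rfl, rfl, h₁, h₂⟩ := ih hs
    exact ⟨_, w₂, _, n₂, by simp, by omega, .cons h₀ h₁, h₂⟩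

theorem parseForest_singleton_iff {s : Symbol T g.NT} {w : List T} {n : ℕ} :
    g.ParseForest [s] w n ↔ g.ParseTree s w n := by
  refine ⟨fun h => ?_, fun h => by simpa using ParseForest.cons h .nil⟩
  obtain _ | ⟨h, hnil⟩ := h
  obtain _ | _ := hnil
  simpa using h

theorem parseForest_map_terminal (w : List T) :
    g.ParseForest (w.map .terminal) w w.length := by
  induction w with
  | nil => exact .nil
  | cons t w ih => simpa [Nat.add_comm] using ParseForest.cons (.leaf t) ih

theorem exists_parseForest_of_derives {ss : List (Symbol T g.NT)} {w : List T}
    (h : g.Derives ss (w.map .terminal)) : ∃ n, g.ParseForest ss w n := by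
  induction h using Relation.ReflTransGen.head_induction_on with
  | refl => exact ⟨_, parseForest_map_terminal w⟩
  | head hp _ ih =>
    obtain ⟨r, hr, hrw⟩ := hp
    obtain ⟨p, q, rfl, rfl⟩ := hrw.exists_parts
    obtain ⟨n, h⟩ := ih
    rw [List.append_assoc] at h
    obtain ⟨_, _, _, _, rfl, -, hpre, h⟩ := h.exists_of_append
    obtain ⟨_, _, _, _, rfl, -, hout, hsuf⟩ := h.exists_of_append
    exact ⟨_, by simpa using
      hpre.append ((parseForest_singleton_iff.2 (.node hr hout)).append hsuf)⟩

theorem derives_iff_exists_parseTree {s : Symbol T g.NT} {w : List T} :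
    g.Derives [s] (w.map .terminal) ↔ ∃ n, g.ParseTree s w n :=
  ⟨fun h => (exists_parseForest_of_derives h).imp fun _ => parseForest_singleton_iff.1,
    fun ⟨_, h⟩ => h.derives⟩

theorem mem_language_iff_exists_parseTree {w : List T} :
    w ∈ g.language ↔ ∃ n, g.ParseTree (.nonterminal g.initial) w n := by
  rw [mem_language_iff, derives_iff_exists_parseTree]

def DerivesContext (g : ContextFreeGrammar T) (ss : List (Symbol T g.NT)) (a : List T) (B : g.NT)
    (b : List T) : Prop :=
  g.Derives ss (a.map .terminal ++ [.nonterminal B] ++ b.map .terminal)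

section DerivesContext
variable {ss ss₁ ss₂ : List (Symbol T g.NT)} {a b w x : List T} {A B : g.NT}

theorem DerivesContext.refl (B : g.NT) : g.DerivesContext [.nonterminal B] [] B [] :=
  Derives.refl _

theorem DerivesContext.append_left (h₁ : g.Derives ss₁ (w.map .terminal))
    (h : g.DerivesContext ss₂ a B b) : g.DerivesContext (ss₁ ++ ss₂) (w ++ a) B b := by
  unfold DerivesContext at h ⊢
  simpa using (h₁.append_right ss₂).trans (h.append_left _)

theorem DerivesContext.append_right (h : g.DerivesContext ss₁ a B b)
    (h₂ : g.Derives ss₂ (w.map .terminal)) : g.DerivesContext (ss₁ ++ ss₂) a B (b ++ w) := by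
  unfold DerivesContext at h ⊢
  simpa using (h.append_right ss₂).trans (h₂.append_left _)

theorem DerivesContext.head {r : ContextFreeRule T g.NT} (hr : r ∈ g.rules)
    (h : g.DerivesContext r.output a B b) : g.DerivesContext [.nonterminal r.input] a B b :=
  Produces.trans_derives ⟨r, hr, .input_output⟩ h

theorem DerivesContext.derives (h : g.DerivesContext ss a B b)
    (hB : g.Derives [.nonterminal B] (x.map .terminal)) : g.Derives ss ((a ++ x ++ b).map .terminal) :=
  h.trans (by simpa using (hB.append_left _).append_right _)

theorem DerivesContext.derives_listPow (h : g.DerivesContext [.nonterminal A] a A b)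
    (hx : g.Derives [.nonterminal A] (x.map .terminal)) (i : ℕ) :
    g.Derives [.nonterminal A] ((listPow a i ++ x ++ listPow b i).map .terminal) := by
  induction i with
  | zero => simpa [listPow_zero] using hx
  | succ i ih => simpa [listPow_succ a, listPow_succ' b] using h.derives ih

end DerivesContext

def Pumpable (g : ContextFreeGrammar T) (A : g.NT) (w : List T) : Prop :=
  ∃ a v x y b, w = a ++ v ++ x ++ y ++ b ∧ v ++ y ≠ [] ∧
    ∀ i, g.Derives [.nonterminal A] ((a ++ listPow v i ++ x ++ listPow y i ++ b).map .terminal)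

theorem Pumpable.of_derivesContext {A B : g.NT} {a b x : List T}
    (h : g.DerivesContext [.nonterminal A] a B b) (hB : g.Pumpable B x) :
    g.Pumpable A (a ++ x ++ b) := by
  obtain ⟨a', v, x', y, b', rfl, hvy, hpump⟩ := hB
  exact ⟨a ++ a', v, x', y, b' ++ b, by simp, hvy, fun i => by simpa using h.derives (hpump i)⟩

theorem pumpable_of_derivesContext_self {A : g.NT} {a b x : List T}
    (h : g.DerivesContext [.nonterminal A] a A b) (hab : a ++ b ≠ [])
    (hx : g.Derives [.nonterminal A] (x.map .terminal)) : g.Pumpable A (a ++ x ++ b) :=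
  ⟨[], a, x, b, [], by simp, hab, fun i => by simpa using h.derives_listPow hx i⟩

def MinParse (g : ContextFreeGrammar T) (A : g.NT) (w : List T) (m : ℕ) : Prop :=
  g.ParseTree (.nonterminal A) w m ∧ ∀ n, g.ParseTree (.nonterminal A) w n → m ≤ n

theorem ParseTree.exists_minParse {A : g.NT} {w : List T} {n : ℕ}
    (h : g.ParseTree (.nonterminal A) w n) : ∃ m ≤ n, g.MinParse A w m := by
  classical
  have hex : ∃ n, g.ParseTree (.nonterminal A) w n := ⟨n, h⟩
  exact ⟨Nat.find hex, Nat.find_min' hex h, Nat.find_spec hex, fun _ => Nat.find_min' hex⟩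

/-- In the top-down search for a repeated nonterminal, `F` collects the ancestors of `ss`. -/
def PumpsOrRevisits (g : ContextFreeGrammar T) (F : Finset g.NT) (ss : List (Symbol T g.NT))
    (w : List T) (k : ℕ) : Prop :=
  (∃ B a x b, w = a ++ x ++ b ∧ g.DerivesContext ss a B b ∧ g.Pumpable B x) ∨
    ∃ B ∈ F, ∃ a x b n, w = a ++ x ++ b ∧ g.DerivesContext ss a B b ∧
      g.ParseTree (.nonterminal B) x n ∧ n < k

section PumpsOrRevisits
variable {F : Finset g.NT} {ss ss₁ ss₂ : List (Symbol T g.NT)} {w w₁ w₂ : List T} {k : ℕ}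

theorem PumpsOrRevisits.mono {k' : ℕ} (h : g.PumpsOrRevisits F ss w k) (hk : k ≤ k') :
    g.PumpsOrRevisits F ss w k' :=
  h.imp_right fun ⟨B, hB, a, x, b, n, hw, hctx, hx, hn⟩ =>
    ⟨B, hB, a, x, b, n, hw, hctx, hx, by omega⟩

theorem PumpsOrRevisits.append_left (h₁ : g.Derives ss₁ (w₁.map .terminal))
    (h : g.PumpsOrRevisits F ss₂ w₂ k) : g.PumpsOrRevisits F (ss₁ ++ ss₂) (w₁ ++ w₂) k := by
  obtain ⟨B, a, x, b, rfl, hctx, hpump⟩ | ⟨B, hB, a, x, b, n, rfl, hctx, hx, hn⟩ := h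
  · exact .inl ⟨B, w₁ ++ a, x, b, by simp, hctx.append_left h₁, hpump⟩
  · exact .inr ⟨B, hB, w₁ ++ a, x, b, n, by simp, hctx.append_left h₁, hx, hn⟩

theorem PumpsOrRevisits.append_right (h : g.PumpsOrRevisits F ss₁ w₁ k)
    (h₂ : g.Derives ss₂ (w₂.map .terminal)) : g.PumpsOrRevisits F (ss₁ ++ ss₂) (w₁ ++ w₂) k := by
  obtain ⟨B, a, x, b, rfl, hctx, hpump⟩ | ⟨B, hB, a, x, b, n, rfl, hctx, hx, hn⟩ := h
  · exact .inl ⟨B, a, x, b ++ w₂, by simp, hctx.append_right h₂, hpump⟩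
  · exact .inr ⟨B, hB, a, x, b ++ w₂, n, by simp, hctx.append_right h₂, hx, hn⟩

/-- A revisit of the root itself with empty context would give a smaller parse tree of the same
word, so by minimality it has nonempty context and pumps. -/
theorem MinParse.pumpsOrRevisits_of_rule [DecidableEq g.NT] {r : ContextFreeRule T g.NT}
    (hmin : g.MinParse r.input w (k + 1)) (hr : r ∈ g.rules)
    (h : g.PumpsOrRevisits (insert r.input F) r.output w (k + 1)) :
    g.PumpsOrRevisits F [.nonterminal r.input] w (k + 1) := by
  obtain ⟨B, a, x, b, rfl, hctx, hpump⟩ | ⟨B, hB, a, x, b, n, rfl, hctx, hx, hn⟩ := h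
  · exact .inl ⟨B, a, x, b, rfl, hctx.head hr, hpump⟩
  obtain rfl | hB := Finset.mem_insert.1 hB
  · by_cases hab : a ++ b = []
    · obtain ⟨rfl, rfl⟩ := List.append_eq_nil_iff.1 hab
      exact absurd (hmin.2 n (by simpa using hx)) (by omega)
    · exact .inl ⟨r.input, [], a ++ x ++ b, [], by simp, .refl _,
        pumpable_of_derivesContext_self (hctx.head hr) hab hx.derives⟩
  · exact .inr ⟨B, hB, a, x, b, n, rfl, hctx.head hr, hx, hn⟩

theorem ParseForest.pumpsOrRevisits_or_length_le {K c L : ℕ} (hL : 1 ≤ L)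
    (IH : ∀ m < K, ∀ B w, B ∉ F → g.MinParse B w m →
      g.PumpsOrRevisits F [.nonterminal B] w m ∨ w.length ≤ L ^ c) :
    ∀ {ss w k}, g.ParseForest ss w k → k < K →
      g.PumpsOrRevisits F ss w (k + 1) ∨ w.length ≤ ss.length * L ^ c := by
  intro ss
  induction ss with
  | nil => rintro w k (_ | _) -; exact .inr (by simp)
  | cons s ss ih =>
    rintro _ _ (_ | @⟨_, w₀, n₀, _, w', k', h₀, hs⟩) hK
    have hhead : g.PumpsOrRevisits F [s] w₀ (n₀ + k' + 1) ∨ w₀.length ≤ L ^ c := by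
      cases s with
      | terminal t =>
        cases h₀
        exact .inr (by simpa using Nat.one_le_pow _ _ hL)
      | nonterminal B =>
        by_cases hB : B ∈ F
        · exact .inl (.inr ⟨B, hB, [], w₀, [], _, by simp, .refl _, h₀, by omega⟩)
        obtain ⟨m, hm, hmin⟩ := h₀.exists_minParse
        exact (IH m (by omega) B w₀ hB hmin).imp_left (·.mono (by omega))
    obtain hhead | hhead := hhead
    · exact .inl (hhead.append_right hs.derives)
    obtain htail | htail := ih hs (by omega)
    · exact .inl ((htail.append_left h₀.derives).mono (by omega))
    · right
      simp only [List.length_append, List.length_cons]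
      linarith

theorem MinParse.pumpsOrRevisits_or_length_le [DecidableEq g.NT] {L : ℕ} {N : Finset g.NT}
    (hL : 1 ≤ L) (hlen : ∀ r ∈ g.rules, r.output.length ≤ L) (hN : ∀ r ∈ g.rules, r.input ∈ N) :
    ∀ m A w F, A ∉ F → g.MinParse A w m →
      g.PumpsOrRevisits F [.nonterminal A] w m ∨ w.length ≤ L ^ (N \ F).card := by
  intro m
  induction m using Nat.strong_induction_on with | _ m IH => ?_
  intro A w F hA ⟨htree, hle⟩
  cases htree with | @node r hr _ k hc => ?_
  have hcard : (N \ insert r.input F).card + 1 = (N \ F).card := by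
    rw [Finset.sdiff_insert, Finset.card_erase_add_one (Finset.mem_sdiff.2 ⟨hN r hr, hA⟩)]
  obtain h | h := hc.pumpsOrRevisits_or_length_le hL
    (fun m hm B w hB hmin => IH m hm B w (insert r.input F) hB hmin) (Nat.lt_succ_self k)
  · exact .inl (MinParse.pumpsOrRevisits_of_rule ⟨.node hr hc, hle⟩ hr h)
  · refine .inr (h.trans ?_)
    rw [← hcard, pow_succ']
    exact Nat.mul_le_mul_right _ (hlen r hr)

end PumpsOrRevisits

theorem exists_pumpable (g : ContextFreeGrammar T) :
    ∃ p, ∀ w ∈ g.language, p ≤ w.length → g.Pumpable g.initial w := by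
  classical
  obtain ⟨L, hL, hlen⟩ : ∃ L, 1 ≤ L ∧ ∀ r ∈ g.rules, r.output.length ≤ L :=
    ⟨_, le_max_left 1 _, fun r hr => le_max_of_le_right (Finset.le_sup (f := (·.output.length)) hr)⟩
  obtain ⟨N, hN⟩ : ∃ N : Finset g.NT, ∀ r ∈ g.rules, r.input ∈ N :=
    ⟨_, fun r hr => Finset.mem_image_of_mem (·.input) hr⟩
  refine ⟨L ^ N.card + 1, fun w hw hp => ?_⟩
  obtain ⟨n, hn⟩ := mem_language_iff_exists_parseTree.1 hw
  obtain ⟨m, -, hmin⟩ := hn.exists_minParse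
  obtain (⟨B, a, x, b, rfl, hctx, hpump⟩ | ⟨B, hB, -⟩) | hshort :=
    MinParse.pumpsOrRevisits_or_length_le hL hlen hN m g.initial w ∅ (Finset.notMem_empty _) hmin
  · exact hpump.of_derivesContext hctx
  · exact absurd hB (Finset.notMem_empty B)
  · rw [Finset.sdiff_empty] at hshort
    omega

end ContextFreeGrammar

theorem Language.IsContextFree.exists_pumping {T : Type*} {L : Language T}
    (hL : L.IsContextFree) :
    ∃ p, ∀ w ∈ L, p ≤ w.length → ∃ a v x y b, w = a ++ v ++ x ++ y ++ b ∧ v ++ y ≠ [] ∧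
      ∀ i, a ++ listPow v i ++ x ++ listPow y i ++ b ∈ L := by
  obtain ⟨g, rfl⟩ := hL
  obtain ⟨p, hp⟩ := g.exists_pumpable
  exact ⟨p, fun w hw hlen => (hp w hw hlen).imp fun a ⟨v, x, y, b, hw, hvy, hpump⟩ =>
    ⟨v, x, y, b, hw, hvy, fun i => (ContextFreeGrammar.mem_language_iff g _).2 (hpump i)⟩⟩

/-- Derivations of `g.interDFA M` preserve this invariant, which makes the product grammar sound. -/
inductive DFA.Traces {T Q S : Type*} (M : DFA T Q) :
    Q → List (Symbol T (Option (Q × S × Q))) → Q → Prop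
  | nil (p : Q) : M.Traces p [] p
  | terminal {p q : Q} (t : T) {u} (h : M.Traces (M.step p t) u q) : M.Traces p (.terminal t :: u) q
  | nonterminal {p p' q : Q} (s : S) {u} (h : M.Traces p' u q) :
      M.Traces p (.nonterminal (some (p, s, p')) :: u) q

namespace DFA
variable {T Q S : Type*} {M : DFA T Q}

theorem traces_append {p q : Q} {u v : List (Symbol T (Option (Q × S × Q)))} :
    M.Traces p (u ++ v) q ↔ ∃ p', M.Traces p u p' ∧ M.Traces p' v q := by
  induction u generalizing p with
  | nil => exact ⟨fun h => ⟨p, .nil p, h⟩, fun ⟨_, .nil _, h⟩ => h⟩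
  | cons X u ih =>
    constructor
    · rintro (_ | ⟨t, h⟩ | ⟨s, h⟩)
      · obtain ⟨p', h₁, h₂⟩ := ih.1 h; exact ⟨p', .terminal t h₁, h₂⟩
      · obtain ⟨p', h₁, h₂⟩ := ih.1 h; exact ⟨p', .nonterminal s h₁, h₂⟩
    · rintro ⟨p', _ | ⟨t, h₁⟩ | ⟨s, h₁⟩, h₂⟩
      · exact .terminal t (ih.2 ⟨p', h₁, h₂⟩)
      · exact .nonterminal s (ih.2 ⟨p', h₁, h₂⟩)

theorem traces_map_terminal {p q : Q} {w : List T} :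
    M.Traces (S := S) p (w.map .terminal) q ↔ M.evalFrom p w = q := by
  induction w generalizing p with
  | nil => exact ⟨fun (.nil _) => rfl, fun h => h ▸ .nil p⟩
  | cons t w ih => exact ⟨fun (.terminal _ h) => ih.1 h, fun h => .terminal t (ih.2 h)⟩

end DFA

namespace ContextFreeGrammar
variable {T Q : Type}

def annotate (g : ContextFreeGrammar T) :
    Q → List (Symbol T g.NT) → List Q → List (Symbol T (Option (Q × Symbol T g.NT × Q)))
  | p, s :: ss, q :: qs => .nonterminal (some (p, s, q)) :: annotate g q ss qs
  | _, _, _ => []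

def eraseState (g : ContextFreeGrammar T) :
    Symbol T (Option (Q × Symbol T g.NT × Q)) → Symbol T g.NT
  | .terminal t => .terminal t
  | .nonterminal none => .nonterminal g.initial
  | .nonterminal (some (_, s, _)) => s

theorem map_eraseState_annotate (g : ContextFreeGrammar T) :
    ∀ (p : Q) (ss : List (Symbol T g.NT)) (qs : List Q), qs.length = ss.length →
      (annotate g p ss qs).map g.eraseState = ss
  | _, [], [], _ => rfl
  | _, s :: ss, q :: qs, h => by
    simp [annotate, eraseState, map_eraseState_annotate g q ss qs (by simpa using h)]

theorem traces_annotate (g : ContextFreeGrammar T) (M : DFA T Q) :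
    ∀ (p : Q) (ss : List (Symbol T g.NT)) (qs : List Q), qs.length = ss.length →
      M.Traces p (annotate g p ss qs) (qs.getLastD p)
  | p, [], [], _ => .nil p
  | p, s :: ss, q :: qs, h => by
    rw [annotate, List.getLastD_cons]
    exact .nonterminal s (traces_annotate g M q ss qs (by simpa using h))

open scoped Classical in
/-- The product grammar: `some (p, s, q)` generates the words generated by `s` that drive `M`
from `p` to `q`, and the new initial symbol `none` chooses an accepting `q`. -/
@[reducible] noncomputable def interDFA [Fintype T] [Fintype Q] (g : ContextFreeGrammar T)
    (M : DFA T Q) : ContextFreeGrammar T where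
  NT := Option (Q × Symbol T g.NT × Q)
  initial := none
  rules :=
    ((Finset.univ.filter (· ∈ M.accept)).image fun q =>
        ⟨none, [.nonterminal (some (M.start, .nonterminal g.initial, q))]⟩) ∪
      (Finset.univ.image fun pt : Q × T =>
        ⟨some (pt.1, .terminal pt.2, M.step pt.1 pt.2), [.terminal pt.2]⟩) ∪
      g.rules.biUnion fun r =>
        (Finset.univ : Finset (Q × List.Vector Q r.output.length)).image fun pqs =>
          ⟨some (pqs.1, .nonterminal r.input, pqs.2.toList.getLastD pqs.1),
            annotate g pqs.1 r.output pqs.2.toList⟩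

variable [Fintype T] [Fintype Q] {g : ContextFreeGrammar T} {M : DFA T Q}

theorem mem_interDFA_rules {r' : ContextFreeRule T (Option (Q × Symbol T g.NT × Q))} :
    r' ∈ (g.interDFA M).rules ↔
      (∃ q ∈ M.accept, r' = ⟨none, [.nonterminal (some (M.start, .nonterminal g.initial, q))]⟩) ∨
      (∃ p t, r' = ⟨some (p, .terminal t, M.step p t), [.terminal t]⟩) ∨
      ∃ r ∈ g.rules, ∃ p qs, qs.length = r.output.length ∧
        r' = ⟨some (p, .nonterminal r.input, qs.getLastD p), annotate g p r.output qs⟩ := by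
  dsimp only [interDFA]
  simp only [Finset.mem_union, Finset.mem_image, Finset.mem_filter, Finset.mem_univ,
    true_and, Finset.mem_biUnion, Prod.exists, or_assoc]
  refine or_congr (by aesop) (or_congr (by aesop) ?_)
  refine exists_congr fun r => and_congr_right fun _ => exists_congr fun p => ?_
  exact ⟨fun ⟨qs, h⟩ => ⟨qs.toList, qs.2, h.symm⟩, fun ⟨qs, hqs, h⟩ => ⟨⟨qs, hqs⟩, h.symm⟩⟩

theorem Produces.map_eraseState {u v : List (Symbol T (Option (Q × Symbol T g.NT × Q)))}
    (h : (g.interDFA M).Produces u v) : g.Derives (u.map g.eraseState) (v.map g.eraseState) := by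
  obtain ⟨r, hr, hrw⟩ := h
  obtain ⟨x, y, rfl, rfl⟩ := hrw.exists_parts
  suffices g.Derives [g.eraseState (.nonterminal r.input)] (r.output.map g.eraseState) by
    simpa using (this.append_left (x.map g.eraseState)).append_right (y.map g.eraseState)
  rcases mem_interDFA_rules.1 hr with ⟨q, -, rfl⟩ | ⟨p, t, rfl⟩ | ⟨r, hr₀, p, qs, hqs, rfl⟩
  · exact Derives.refl _
  · exact Derives.refl _
  · rw [map_eraseState_annotate g p r.output qs hqs]
    exact Produces.single ⟨r, hr₀, .input_output⟩

theorem Derives.map_eraseState {u v : List (Symbol T (Option (Q × Symbol T g.NT × Q)))}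
    (h : (g.interDFA M).Derives u v) : g.Derives (u.map g.eraseState) (v.map g.eraseState) := by
  induction h with
  | refl => exact Derives.refl _
  | tail _ hp ih => exact ih.trans hp.map_eraseState

theorem Produces.traces {u v : List (Symbol T (Option (Q × Symbol T g.NT × Q)))} {p q : Q}
    (h : (g.interDFA M).Produces u v) (hu : M.Traces p u q) : M.Traces p v q := by
  obtain ⟨r, hr, hrw⟩ := h
  obtain ⟨x, y, rfl, rfl⟩ := hrw.exists_parts
  rw [List.append_assoc] at hu ⊢
  obtain ⟨p₁, hx, hAy⟩ := DFA.traces_append.1 hu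
  obtain ⟨p₂, hA, hy⟩ := DFA.traces_append.1 hAy
  refine DFA.traces_append.2 ⟨p₁, hx, DFA.traces_append.2 ⟨p₂, ?_, hy⟩⟩
  rcases mem_interDFA_rules.1 hr with ⟨q, -, rfl⟩ | ⟨p, t, rfl⟩ | ⟨r, hr, p, qs, hqs, rfl⟩
  · cases hA
  · obtain _ | _ | ⟨_, hnil⟩ := hA
    cases hnil
    exact .terminal t (.nil _)
  · obtain _ | _ | ⟨_, hnil⟩ := hA
    cases hnil
    exact traces_annotate g M _ r.output qs hqs

theorem Derives.traces {u v : List (Symbol T (Option (Q × Symbol T g.NT × Q)))} {p q : Q}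
    (h : (g.interDFA M).Derives u v) (hu : M.Traces p u q) : M.Traces p v q := by
  induction h with
  | refl => exact hu
  | tail _ hp ih => exact hp.traces ih

mutual
theorem ParseTree.derives_interDFA {s : Symbol T g.NT} {w : List T} {n : ℕ} :
    g.ParseTree s w n → ∀ p,
      (g.interDFA M).Derives [.nonterminal (some (p, s, M.evalFrom p w))] (w.map .terminal)
  | .leaf t, p =>
    Produces.single ⟨_, mem_interDFA_rules.2 (.inr (.inl ⟨p, t, rfl⟩)), .input_output⟩
  | .node (r := r) hr hc, p => by
    obtain ⟨qs, hlen, hlast, hqs⟩ := hc.derives_interDFA p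
    rw [← hlast]
    exact Produces.trans_derives
      ⟨_, mem_interDFA_rules.2 (.inr (.inr ⟨r, hr, p, qs, hlen, rfl⟩)), .input_output⟩ hqs

theorem ParseForest.derives_interDFA {ss : List (Symbol T g.NT)} {w : List T} {n : ℕ} :
    g.ParseForest ss w n → ∀ p, ∃ qs : List Q, qs.length = ss.length ∧
      qs.getLastD p = M.evalFrom p w ∧
        (g.interDFA M).Derives (annotate g p ss qs) (w.map .terminal)
  | .nil, p => ⟨[], rfl, rfl, Derives.refl _⟩
  | .cons (s := s) (w := w₀) h hs, p => by
    obtain ⟨qs, hlen, hlast, hqs⟩ := hs.derives_interDFA (M.evalFrom p w₀)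
    refine ⟨M.evalFrom p w₀ :: qs, by simp [hlen], ?_, ?_⟩
    · rw [List.getLastD_cons, hlast, DFA.evalFrom_of_append]
    · simpa [annotate] using ((h.derives_interDFA p).append_right _).trans (hqs.append_left _)
end

theorem exists_mem_accept_of_derives_none {w : List T}
    (h : (g.interDFA M).Derives [.nonterminal none] (w.map .terminal)) :
    ∃ q ∈ M.accept, (g.interDFA M).Derives
      [.nonterminal (some (M.start, .nonterminal g.initial, q))] (w.map .terminal) := by
  obtain h | ⟨v, ⟨r, hr, hrw⟩, hv⟩ := h.eq_or_head
  · cases w <;> simp at h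
  obtain ⟨x, y, hxy, rfl⟩ := hrw.exists_parts
  obtain ⟨rfl, hA, rfl⟩ : x = [] ∧ r.input = none ∧ y = [] := by
    rcases x with _ | ⟨_, _ | _⟩ <;> simp_all
  rcases mem_interDFA_rules.1 hr with ⟨q, hq, rfl⟩ | ⟨p, t, rfl⟩ | ⟨r, -, p, qs, -, rfl⟩
  · exact ⟨q, hq, by simpa using hv⟩
  all_goals cases hA

theorem interDFA_language : (g.interDFA M).language = g.language ⊓ M.accepts := by
  ext w
  rw [Language.mem_inf]
  constructor
  · intro hw
    obtain ⟨q, hq, hd⟩ := exists_mem_accept_of_derives_none ((mem_language_iff _ w).1 hw)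
    refine ⟨(mem_language_iff g w).2
      (by simpa [eraseState, Function.comp_def] using hd.map_eraseState), ?_⟩
    have := hd.traces (.nonterminal _ (.nil q))
    rw [DFA.mem_accepts, DFA.eval, DFA.traces_map_terminal.1 this]
    exact hq
  · rintro ⟨hwL, hwR⟩
    obtain ⟨n, hn⟩ := mem_language_iff_exists_parseTree.1 hwL
    exact Produces.trans_derives
      ⟨_, mem_interDFA_rules.2 (.inl ⟨_, hwR, rfl⟩), .input_output⟩ (hn.derives_interDFA M.start)

end ContextFreeGrammar

theorem Language.IsContextFree.inf_isRegular {T : Type} [Fintype T] {L R : Language T}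
    (hL : L.IsContextFree) (hR : R.IsRegular) : (L ⊓ R).IsContextFree := by
  obtain ⟨g, rfl⟩ := hL
  obtain ⟨Q, _, M, rfl⟩ := hR
  exact ⟨g.interDFA M, g.interDFA_language⟩

theorem Language.isRegular_of_leftQuotient_mem {α : Type*} {L : Language α}
    {S : Set (Language α)} (hS : S.Finite) (hL : L ∈ S)
    (hstep : ∀ K ∈ S, ∀ a, K.leftQuotient [a] ∈ S) : L.IsRegular := by
  refine .of_finite_range_leftQuotient (hS.subset ?_)
  rintro _ ⟨x, rfl⟩
  induction x using List.reverseRecOn with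
  | nil => exact hL
  | append_singleton x a ih => rw [Language.leftQuotient_append]; exact hstep _ ih a

theorem Language.leftQuotient_zero {α : Type*} (x : List α) :
    (0 : Language α).leftQuotient x = 0 :=
  rfl

theorem Language.leftQuotient_one_cons {α : Type*} (a : α) (x : List α) :
    (1 : Language α).leftQuotient (a :: x) = 0 := by
  ext w
  simp [Language.mem_one]

def zStarH : Language Alph :=
  {w | ∃ m : ℕ, w = List.replicate m Alph.z ++ [Alph.h]}

theorem cons_mem_zStarH {a : Alph} {w : List Alph} :
    a :: w ∈ zStarH ↔ (a = .z ∧ w ∈ zStarH) ∨ (a = .h ∧ w = []) := by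
  constructor
  · rintro ⟨_ | m, h⟩
    · simp_all
    · simp only [List.replicate_succ, List.cons_append, List.cons.injEq] at h
      exact .inl ⟨h.1, m, h.2⟩
  · rintro (⟨rfl, m, rfl⟩ | ⟨rfl, rfl⟩)
    · exact ⟨m + 1, rfl⟩
    · exact ⟨0, rfl⟩

theorem cons_mem_Lu0h {a : Alph} {w : List Alph} :
    a :: w ∈ Lu0h ↔ (a = .u ∧ w ∈ Lu0h) ∨ a :: w ∈ zStarH := by
  constructor
  · rintro ⟨_ | n, m, h⟩
    · exact .inr ⟨m, by simpa using h⟩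
    · simp only [List.replicate_succ, List.cons_append, List.cons.injEq] at h
      exact .inl ⟨h.1, n, m, h.2⟩
  · rintro (⟨rfl, n, m, rfl⟩ | ⟨m, h⟩)
    · exact ⟨n + 1, m, rfl⟩
    · exact ⟨0, m, by simpa using h⟩

theorem leftQuotient_zStarH (a : Alph) :
    zStarH.leftQuotient [a] = match a with | .u => 0 | .z => zStarH | .h => 1 := by
  ext w
  cases a <;> simp [cons_mem_zStarH, Language.mem_one]

theorem leftQuotient_Lu0h (a : Alph) :
    Lu0h.leftQuotient [a] = match a with | .u => Lu0h | .z => zStarH | .h => 1 := by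
  ext w
  cases a <;> simp [cons_mem_Lu0h, cons_mem_zStarH, Language.mem_one]

theorem isRegular_Lu0h : Lu0h.IsRegular := by
  refine Language.isRegular_of_leftQuotient_mem (S := {Lu0h, zStarH, 1, 0}) (by simp) (by simp) ?_
  rintro K (rfl | rfl | rfl | rfl) a <;> cases a <;>
    simp [leftQuotient_Lu0h, leftQuotient_zStarH, Language.leftQuotient_one_cons,
      Language.leftQuotient_zero]

theorem Nat.exists_add_mul_lt_two_pow (a c : ℕ) : ∃ i, a + i * c < 2 ^ i := by
  refine ⟨2 * (a + 2 * c + 1), ?_⟩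
  have hN : a + 2 * c + 2 ≤ 2 ^ (a + 2 * c + 1) := Nat.lt_two_pow_self
  rw [pow_mul', pow_two]
  nlinarith [Nat.mul_le_mul hN hN]

theorem count_listPow {α : Type*} [BEq α] (c : α) (l : List α) (i : ℕ) :
    (listPow l i).count c = i * l.count c := by
  simp [listPow, List.count_flatten, List.map_replicate, List.sum_replicate]

theorem count_pump {α : Type*} [BEq α] (c : α) (a v x y b : List α) (i : ℕ) :
    (a ++ listPow v i ++ x ++ listPow y i ++ b).count c =
      (a ++ x ++ b).count c + i * (v ++ y).count c := by
  simp only [List.count_append, count_listPow]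
  ring

theorem count_of_mem_Lcc' {w : List Alph} (hw : w ∈ Lcc') :
    w.count .h = 1 ∧ 2 ^ w.count .z ≤ w.count .u + 1 := by
  obtain ⟨n, m, rfl, hnm⟩ := hw
  simp [List.count_replicate]
  have := Nat.one_le_two_pow (n := m)
  omega

theorem not_isContextFree_Lcc' : ¬ Lcc'.IsContextFree := by
  intro hCF
  obtain ⟨p, hp⟩ := hCF.exists_pumping
  have hw : List.replicate (2 ^ p - 1) Alph.u ++ List.replicate p Alph.z ++ [Alph.h] ∈ Lcc' :=
    ⟨_, _, rfl, le_rfl⟩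
  obtain ⟨a, v, x, y, b, hdec, hvy, hpump⟩ := hp _ hw (by simp; omega)
  have hcount (c : Alph) : (a ++ x ++ b).count c + (v ++ y).count c =
      (List.replicate (2 ^ p - 1) Alph.u ++ List.replicate p Alph.z ++ [Alph.h]).count c := by
    rw [hdec]
    simp only [List.count_append]
    ring
  have hpumped (i : ℕ) := count_of_mem_Lcc' (hpump i)
  simp only [count_pump] at hpumped
  have hu : (a ++ x ++ b).count .u + (v ++ y).count .u = 2 ^ p - 1 := by
    rw [hcount]; simp [List.count_replicate]
  have hz : (a ++ x ++ b).count .z + (v ++ y).count .z = p := by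
    rw [hcount]; simp [List.count_replicate]
  have hh : (v ++ y).count .h = 0 := by
    have := (hpumped 0).1; have := (hpumped 1).1; omega
  obtain ⟨c, hc⟩ := List.exists_mem_of_ne_nil _ hvy
  have hcpos := List.count_pos_iff.2 hc
  rcases Nat.eq_zero_or_pos ((v ++ y).count .z) with hz0 | hz0
  · have hu0 : 0 < (v ++ y).count .u := by cases c <;> first | exact hcpos | omega
    have hdown := (hpumped 0).2
    rw [zero_mul, add_zero, show (a ++ x ++ b).count .z = p by omega] at hdown
    omega
  · obtain ⟨i, hi⟩ :=
      Nat.exists_add_mul_lt_two_pow ((a ++ x ++ b).count .u + 1) ((v ++ y).count .u)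
    have h2 : 2 ^ i ≤ 2 ^ ((a ++ x ++ b).count .z + i * (v ++ y).count .z) :=
      Nat.pow_le_pow_right two_pos (by nlinarith)
    have := (hpumped i).2
    omega

instance : Fintype Alph := ⟨{.u, .z, .h}, fun x => by cases x <;> simp⟩

/-- closure of CF under intersection with regular languages yields a
contradiction if L ⊓ R is not CF; consequently any L with L ⊓ { u^n 0^m h } = L'
is not context-free. -/
theorem not_contextFree_of_inter :
    (∀ L R : Language Alph, L.IsContextFree → R.IsRegular →
        ¬ (L ⊓ R).IsContextFree → False) ∧
    (∀ L : Language Alph, L ⊓ Lu0h = Lcc' → ¬ L.IsContextFree) := by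
  refine ⟨fun L R hL hR hLR => hLR (hL.inf_isRegular hR), fun L hLR hL => ?_⟩
  exact not_isContextFree_Lcc' (hLR ▸ hL.inf_isRegular isRegular_Lu0h)
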